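/- Fix $r,\mu>0$ with $\mu> e$ and $0\le\beta<1$, and let $S:[0,\infty)\to[0,\infty)$ satisfy $b_0 s(s+1)^{\beta-1}\le S(s)\le b_1 s(s+1)^{\beta-1}$ for all $s>0$ with constants $0<b_0\le b_1$. Define $G(s)=\int_{r/\mu}^{s}\int_{r/\mu}^{\rho}\frac{1}{S(\sigma)}\,d\sigma\,d\rho$ for $s>0$. Then for all $s>0$, $G(s)\le \frac{2}{b_0}s\ln s+\frac{2s}{b_0}\ln\frac{\mu}{r}+\frac{2s^{2-\beta}}{b_0(1-\beta)(2-\beta)}+\frac{2r}{b_0\mu}+\frac{2r^{2-\beta}}{b_0(2-\beta)\mu^{2-\beta}}$. -/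

import Mathlib

/-!
Since `(σ + 1) ^ (1 - β) ≤ σ ^ (1 - β) + 1`, the lower bound on `S` gives
`1 / S σ ≤ (2 / b0) * (σ⁻¹ + σ ^ (-β))` for `σ > 0`. The iterated integral
`∫ ρ in a..s, ∫ σ in a..ρ, f σ` is monotone in `f` on `[[a, s]]` for either order of `a` and `s`
(for `s < a` both integrals are reversed and the two signs cancel), so `G s` is at most the
iterated integral of this majorant. That one is explicit,
`s log (s / a) - s + a + s ^ (2 - β) / ((1 - β) (2 - β)) + a ^ (2 - β) / (2 - β)
  - s a ^ (1 - β) / (1 - β)` with `a = r / μ`, and dropping its two negative terms gives the bound.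
-/

open intervalIntegral Real Set

section IteratedIntegral

variable {a s : ℝ}

theorem iteratedIntegral_nonneg {h : ℝ → ℝ} (h0 : ∀ x ∈ uIcc a s, 0 ≤ h x) :
    0 ≤ ∫ ρ in a..s, ∫ σ in a..ρ, h σ := by
  rcases le_total a s with has | hsa
  · refine integral_nonneg has fun ρ hρ => integral_nonneg hρ.1 fun σ hσ => h0 σ ?_
    rw [uIcc_of_le has]
    exact ⟨hσ.1, hσ.2.trans hρ.2⟩
  · rw [integral_symm, ← integral_neg]
    refine integral_nonneg hsa fun ρ hρ => ?_
    rw [← integral_symm]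
    refine integral_nonneg hρ.2 fun σ hσ => h0 σ ?_
    rw [uIcc_of_ge hsa]
    exact ⟨hρ.1.trans hσ.1, hσ.2⟩

theorem iteratedIntegral_sub {f g : ℝ → ℝ} (hf : ContinuousOn f (uIcc a s))
    (hg : ContinuousOn g (uIcc a s)) :
    ∫ ρ in a..s, ∫ σ in a..ρ, (g σ - f σ) =
      (∫ ρ in a..s, ∫ σ in a..ρ, g σ) - ∫ ρ in a..s, ∫ σ in a..ρ, f σ := by
  have hint : ∀ φ : ℝ → ℝ, ContinuousOn φ (uIcc a s) →
      ∀ ρ ∈ uIcc a s, IntervalIntegrable φ MeasureTheory.volume a ρ := fun φ hφ ρ hρ =>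
    (hφ.mono (uIcc_subset_uIcc_left hρ)).intervalIntegrable
  rw [integral_congr fun ρ hρ => integral_sub (hint g hg ρ hρ) (hint f hf ρ hρ)]
  exact integral_sub
    (continuousOn_primitive_interval' hg.intervalIntegrable left_mem_uIcc).intervalIntegrable
    (continuousOn_primitive_interval' hf.intervalIntegrable left_mem_uIcc).intervalIntegrable

theorem iteratedIntegral_mono {f g : ℝ → ℝ} (hf : ContinuousOn f (uIcc a s))
    (hg : ContinuousOn g (uIcc a s)) (hfg : ∀ x ∈ uIcc a s, f x ≤ g x) :
    ∫ ρ in a..s, ∫ σ in a..ρ, f σ ≤ ∫ ρ in a..s, ∫ σ in a..ρ, g σ :=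
  sub_nonneg.mp <| iteratedIntegral_sub hf hg ▸
    iteratedIntegral_nonneg fun x hx => sub_nonneg.mpr (hfg x hx)

theorem integral_inv_add_rpow {p ρ : ℝ} (ha : 0 < a) (hρ : 0 < ρ) (hp : -1 < p) :
    ∫ σ in a..ρ, (σ⁻¹ + σ ^ p) =
      log ρ + ρ ^ (p + 1) / (p + 1) - (log a + a ^ (p + 1) / (p + 1)) := by
  have h0 : (0 : ℝ) ∉ uIcc a ρ := fun h => (lt_min ha hρ).not_ge h.1
  rw [integral_add (intervalIntegrable_inv_iff.mpr (Or.inr h0)) (intervalIntegrable_rpow' hp),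
    integral_inv h0, integral_rpow (Or.inl hp), log_div hρ.ne' ha.ne']
  ring

theorem iteratedIntegral_inv_add_rpow {p : ℝ} (ha : 0 < a) (hs : 0 < s) (hp : -1 < p) :
    ∫ ρ in a..s, ∫ σ in a..ρ, (σ⁻¹ + σ ^ p) =
      s * log (s / a) - s + a + s ^ (p + 2) / ((p + 1) * (p + 2)) + a ^ (p + 2) / (p + 2)
        - s * a ^ (p + 1) / (p + 1) := by
  have hpos : ∀ ρ ∈ uIcc a s, 0 < ρ := fun ρ hρ => (lt_min ha hs).trans_le hρ.1
  rw [integral_congr fun ρ hρ => integral_inv_add_rpow ha (hpos ρ hρ) hp,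
    integral_sub (intervalIntegrable_log'.add
      ((intervalIntegrable_rpow' (by linarith)).div_const _)) intervalIntegrable_const,
    integral_add intervalIntegrable_log' ((intervalIntegrable_rpow' (by linarith)).div_const _),
    integral_div, integral_log, integral_rpow (Or.inl (by linarith)), integral_const,
    smul_eq_mul, log_div hs.ne' ha.ne', show p + 1 + 1 = p + 2 by ring,
    show p + 2 = (p + 1) + 1 by ring, rpow_add_one ha.ne']
  have : p + 1 ≠ 0 := by linarith
  have : p + 1 + 1 ≠ 0 := by linarith
  field_simp
  ring

theorem iteratedIntegral_inv_add_rpow_le {p : ℝ} (ha : 0 < a) (hs : 0 < s) (hp : -1 < p) :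
    ∫ ρ in a..s, ∫ σ in a..ρ, (σ⁻¹ + σ ^ p) ≤
      s * log (s / a) + a + s ^ (p + 2) / ((p + 1) * (p + 2)) + a ^ (p + 2) / (p + 2) := by
  have : 0 ≤ s * a ^ (p + 1) / (p + 1) := div_nonneg (by positivity) (by linarith)
  rw [iteratedIntegral_inv_add_rpow ha hs hp]
  linarith

end IteratedIntegral

theorem one_div_le_of_mul_rpow_add_one_le {b β σ S : ℝ} (hb : 0 < b) (hβ0 : 0 ≤ β)
    (hβ1 : β ≤ 1) (hσ : 0 < σ) (hS : b * σ * (σ + 1) ^ (β - 1) ≤ S) :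
    1 / S ≤ 2 / b * (σ⁻¹ + σ ^ (-β)) := by
  have hσ1 : 0 < σ + 1 := by linarith
  calc 1 / S ≤ 1 / (b * σ * (σ + 1) ^ (β - 1)) := one_div_le_one_div_of_le (by positivity) hS
    _ = (σ + 1) ^ (1 - β) / (b * σ) := by
        rw [show β - 1 = -(1 - β) by ring, rpow_neg hσ1.le]
        field_simp
    _ ≤ (σ ^ (1 - β) + 1 ^ (1 - β)) / (b * σ) := by
        gcongr
        exact rpow_add_le_add_rpow hσ.le zero_le_one (by linarith) (by linarith)
    _ = 1 / b * (σ⁻¹ + σ ^ (-β)) := by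
        rw [one_rpow, show 1 - β = -β + 1 by ring, rpow_add_one hσ.ne']
        field_simp
        ring
    _ ≤ 2 / b * (σ⁻¹ + σ ^ (-β)) := by
        gcongr
        norm_num

theorem stmt_4_general (r μ β b0 b1 : ℝ) (hr : 0 < r) (hμ : 0 < μ)
    (hβ0 : 0 ≤ β) (hβ1 : β < 1) (hb0 : 0 < b0)
    (S : ℝ → ℝ) (hS_cont : ContinuousOn S (Set.Ioi 0))
    (hS : ∀ s : ℝ, 0 < s →
      b0 * s * (s + 1) ^ (β - 1) ≤ S s ∧ S s ≤ b1 * s * (s + 1) ^ (β - 1))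
    (G : ℝ → ℝ)
    (hG : ∀ s : ℝ, 0 < s → G s = ∫ ρ in (r / μ)..s, ∫ σ in (r / μ)..ρ, 1 / S σ) :
    ∀ s : ℝ, 0 < s →
      G s ≤ 2 / b0 * s * Real.log s + 2 * s / b0 * Real.log (μ / r)
        + 2 * s ^ (2 - β) / (b0 * (1 - β) * (2 - β)) + 2 * r / (b0 * μ)
        + 2 * r ^ (2 - β) / (b0 * (2 - β) * μ ^ (2 - β)) := by
  intro s hs
  set a := r / μ with ha_def
  have ha : 0 < a := div_pos hr hμ
  have hpos : uIcc a s ⊆ Ioi 0 := fun σ hσ => (lt_min ha hs).trans_le hσ.1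
  have hS_pos : ∀ σ ∈ uIcc a s, 0 < S σ := fun σ hσ => by
    have hσ0 : 0 < σ := hpos hσ
    exact (by positivity : 0 < b0 * σ * (σ + 1) ^ (β - 1)).trans_le (hS σ hσ0).1
  have hbound : ∀ σ ∈ uIcc a s, 1 / S σ ≤ 2 / b0 * (σ⁻¹ + σ ^ (-β)) := fun σ hσ =>
    one_div_le_of_mul_rpow_add_one_le hb0 hβ0 hβ1.le (hpos hσ) (hS σ (hpos hσ)).1
  have hf_cont : ContinuousOn (fun σ => 1 / S σ) (uIcc a s) :=
    continuousOn_const.div (hS_cont.mono hpos) fun σ hσ => (hS_pos σ hσ).ne'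
  have hg_cont : ContinuousOn (fun σ => 2 / b0 * (σ⁻¹ + σ ^ (-β))) (uIcc a s) := by
    fun_prop (disch := exact fun σ hσ => (hpos hσ).ne')
  rw [hG s hs]
  calc _ ≤ ∫ ρ in a..s, ∫ σ in a..ρ, 2 / b0 * (σ⁻¹ + σ ^ (-β)) :=
        iteratedIntegral_mono hf_cont hg_cont hbound
    _ = 2 / b0 * ∫ ρ in a..s, ∫ σ in a..ρ, (σ⁻¹ + σ ^ (-β)) := by
        simp only [integral_const_mul]
    _ ≤ 2 / b0 * (s * log (s / a) + a + s ^ (2 - β) / ((1 - β) * (2 - β))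
          + a ^ (2 - β) / (2 - β)) := by
        gcongr
        simpa only [neg_add_eq_sub] using
          iteratedIntegral_inv_add_rpow_le (p := -β) ha hs (by linarith)
    _ = _ := by
        have : 1 - β ≠ 0 := by linarith
        have : 2 - β ≠ 0 := by linarith
        rw [log_div hs.ne' ha.ne', ha_def, log_div hr.ne' hμ.ne', log_div hμ.ne' hr.ne',
          div_rpow hr.le hμ.le]
        field_simp
        ring

theorem stmt_4 (r μ β b0 b1 : ℝ) (hr : 0 < r) (hμ : 0 < μ) (hμe : Real.exp 1 < μ)
    (hβ0 : 0 ≤ β) (hβ1 : β < 1) (hb0 : 0 < b0) (hb01 : b0 ≤ b1)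
    (S : ℝ → ℝ) (hS_cont : ContinuousOn S (Set.Ioi 0))
    (hS : ∀ s : ℝ, 0 < s →
      b0 * s * (s + 1) ^ (β - 1) ≤ S s ∧ S s ≤ b1 * s * (s + 1) ^ (β - 1))
    (G : ℝ → ℝ)
    (hG : ∀ s : ℝ, 0 < s → G s = ∫ ρ in (r / μ)..s, ∫ σ in (r / μ)..ρ, 1 / S σ) :
    ∀ s : ℝ, 0 < s →
      G s ≤ 2 / b0 * s * Real.log s + 2 * s / b0 * Real.log (μ / r)
        + 2 * s ^ (2 - β) / (b0 * (1 - β) * (2 - β)) + 2 * r / (b0 * μ)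
        + 2 * r ^ (2 - β) / (b0 * (2 - β) * μ ^ (2 - β)) :=
  stmt_4_general r μ β b0 b1 hr hμ hβ0 hβ1 hb0 S hS_cont hS G hG
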